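/- The matrix semiring Mₙ(𝕋̄) over the triad semiring is isomorphic to a subsemiring of M_{3n}(𝕋): the composite of the entrywise map (a,b,c) ↦ C[a,b,c] followed by block flattening is an injective semiring homomorphism Mₙ(𝕋̄) → M_{3n}(𝕋). -/
import Mathlib


open Matrix

/-- Tropical semiring carrier: ℤ ∪ {-∞}. -/
abbrev T : Type := WithBot ℤ
/-- Tropical addition: max (with -∞ = ⊥ least). -/
def tadd (a b : T) : T := a ⊔ b
/-- Tropical multiplication: ordinary addition, with -∞ absorbing. -/
def tmul (a b : T) : T := a + b

/-- Triad semiring carrier 𝕋̄ = 𝕋 × 𝕋 × 𝕋. -/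
abbrev TT : Type := T × T × T
/-- Componentwise tropical addition on triples. -/
def vadd (x y : TT) : TT := (tadd x.1 y.1, tadd x.2.1 y.2.1, tadd x.2.2 y.2.2)
/-- Twisted triad multiplication. -/
def vmul (x y : TT) : TT :=
  ( tadd (tadd (tmul x.1 y.1) (tmul x.2.1 y.2.2)) (tmul x.2.2 y.2.1),
    tadd (tadd (tmul x.1 y.2.1) (tmul x.2.1 y.1)) (tmul x.2.2 y.2.2),
    tadd (tadd (tmul x.1 y.2.2) (tmul x.2.1 y.2.1)) (tmul x.2.2 y.1) )
/-- Triad multiplicative identity (0, -∞, -∞). -/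
def vone : TT := ((0 : T), (⊥ : T), (⊥ : T))
/-- Triad additive identity (-∞, -∞, -∞). -/
def vzero : TT := ((⊥ : T), (⊥ : T), (⊥ : T))

/-- Circulant matrix C[c₀,…,c_{n-1}] with entry C i j = c ((j-i) mod n). -/
def circ {n : ℕ} {S : Type*} (v : Fin n → S) : Matrix (Fin n) (Fin n) S :=
  fun i j => v (j - i)

/-- ψ : 𝕋̄ → M₃(𝕋), (a,b,c) ↦ C[a,b,c]. -/
def ψ (x : TT) : Matrix (Fin 3) (Fin 3) T := circ ![x.1, x.2.1, x.2.2]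

/-- Entrywise tropical matrix addition. -/
def matAdd {m : ℕ} (A B : Matrix (Fin m) (Fin m) T) : Matrix (Fin m) (Fin m) T :=
  fun i j => tadd (A i j) (B i j)
/-- Tropical (max-plus) matrix multiplication. -/
def matMul {m : ℕ} (A B : Matrix (Fin m) (Fin m) T) : Matrix (Fin m) (Fin m) T :=
  fun i j => Finset.univ.sup fun k => tmul (A i k) (B k j)
/-- Tropical identity matrix: 0 on the diagonal, -∞ elsewhere. -/
def matId (m : ℕ) : Matrix (Fin m) (Fin m) T :=
  fun i j => if i = j then (0 : T) else ⊥
/-- Iterated tropical matrix power. -/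
def matPow {m : ℕ} (A : Matrix (Fin m) (Fin m) T) : ℕ → Matrix (Fin m) (Fin m) T
  | 0 => matId m
  | k+1 => matMul (matPow A k) A

/-- Entrywise addition of matrices over the triad semiring. -/
def matAddTT {m : ℕ} (A B : Matrix (Fin m) (Fin m) TT) : Matrix (Fin m) (Fin m) TT :=
  fun i j => vadd (A i j) (B i j)
/-- Matrix multiplication over the triad semiring. -/
def matMulTT {m : ℕ} (A B : Matrix (Fin m) (Fin m) TT) : Matrix (Fin m) (Fin m) TT :=
  fun i j => Finset.univ.sup fun k => vmul (A i k) (B k j)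
/-- Identity matrix over the triad semiring. -/
def matIdTT (m : ℕ) : Matrix (Fin m) (Fin m) TT :=
  fun i j => if i = j then vone else vzero
/-- Iterated matrix power over the triad semiring. -/
def matPowTT {m : ℕ} (A : Matrix (Fin m) (Fin m) TT) : ℕ → Matrix (Fin m) (Fin m) TT
  | 0 => matIdTT m
  | k+1 => matMulTT (matPowTT A k) A

/-- Iterated triad power. -/
def vpow (x : TT) : ℕ → TT
  | 0 => vone
  | k+1 => vmul (vpow x k) x

/-- Φ : Mₙ(𝕋̄) → M_{3n}(𝕋): entrywise ψ followed by block flattening. -/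
def Φ {n : ℕ} (A : Matrix (Fin n) (Fin n) TT) : Matrix (Fin (n * 3)) (Fin (n * 3)) T :=
  fun p q =>
    ψ (A (finProdFinEquiv.symm p).1 (finProdFinEquiv.symm q).1)
      (finProdFinEquiv.symm p).2 (finProdFinEquiv.symm q).2

/-- Kleene star A* = I ⊕ A ⊕ ⋯ ⊕ A^{⊙(m-1)}. -/
def kstar {m : ℕ} (A : Matrix (Fin m) (Fin m) T) : Matrix (Fin m) (Fin m) T :=
  fun i j => (Finset.range m).sup fun k => matPow A k i j

lemma sup_equiv {α β γ : Type*} [Fintype α] [Fintype β]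
    [SemilatticeSup γ] [OrderBot γ] (e : α ≃ β) (f : β → γ) :
    Finset.univ.sup f = Finset.univ.sup (fun a => f (e a)) := by
  apply le_antisymm
  · exact Finset.sup_le fun b _ => by
      simpa using Finset.le_sup (f := fun a => f (e a)) (Finset.mem_univ (e.symm b))
  · exact Finset.sup_le fun a _ => Finset.le_sup (Finset.mem_univ (e a))

lemma fst_sup {α : Type*} (s : Finset α) (f : α → TT) :
    (s.sup f).1 = s.sup fun a => (f a).1 := by
  induction s using Finset.cons_induction with
  | empty => rfl
  | cons a s ha ih => simp [Finset.sup_cons, ih]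

lemma snd1_sup {α : Type*} (s : Finset α) (f : α → TT) :
    (s.sup f).2.1 = s.sup fun a => (f a).2.1 := by
  induction s using Finset.cons_induction with
  | empty => rfl
  | cons a s ha ih => simp [Finset.sup_cons, ih]

lemma snd2_sup {α : Type*} (s : Finset α) (f : α → TT) :
    (s.sup f).2.2 = s.sup fun a => (f a).2.2 := by
  induction s using Finset.cons_induction with
  | empty => rfl
  | cons a s ha ih => simp [Finset.sup_cons, ih]

lemma psi_sup {α : Type*} (s : Finset α) (f : α → TT) (i j : Fin 3) :
    ψ (s.sup f) i j = s.sup fun a => ψ (f a) i j := by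
  unfold ψ circ
  fin_cases i <;> fin_cases j <;>
    simp [fst_sup, snd1_sup, snd2_sup, show (-1 : Fin 3) = 2 from rfl,
      show (-2 : Fin 3) = 1 from rfl]

lemma univ3 : (Finset.univ : Finset (Fin 3)) = {0, 1, 2} := by decide

set_option maxHeartbeats 1000000 in
lemma psi_vmul (x y : TT) (i j : Fin 3) :
    ψ (vmul x y) i j = Finset.univ.sup fun t : Fin 3 => tmul (ψ x i t) (ψ y t j) := by
  rw [univ3]
  fin_cases i <;> fin_cases j <;>
    · simp [ψ, circ, vmul, tadd, tmul, Finset.sup_insert, Finset.sup_singleton,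
        show (-1 : Fin 3) = 2 from rfl, show (-2 : Fin 3) = 1 from rfl]
      ac_rfl

lemma psi_vadd (x y : TT) (i j : Fin 3) :
    ψ (vadd x y) i j = tadd (ψ x i j) (ψ y i j) := by
  unfold ψ circ vadd
  fin_cases i <;> fin_cases j <;> rfl

lemma psi_inj : Function.Injective ψ := by
  intro x y h
  have h0 := congrFun (congrFun h 0) 0
  have h1 := congrFun (congrFun h 0) 1
  have h2 := congrFun (congrFun h 0) 2
  simp [ψ, circ] at h0 h1 h2
  exact Prod.ext h0 (Prod.ext h1 h2)

/-- Φ : Mₙ(𝕋̄) → M_{3n}(𝕋) (entrywise (a,b,c) ↦ C[a,b,c] followed by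
block flattening) is an injective semiring homomorphism. -/
theorem Phi_injective_hom (n : ℕ) :
    Function.Injective (Φ (n := n)) ∧
    (∀ A B : Matrix (Fin n) (Fin n) TT, Φ (matAddTT A B) = matAdd (Φ A) (Φ B)) ∧
    (∀ A B : Matrix (Fin n) (Fin n) TT, Φ (matMulTT A B) = matMul (Φ A) (Φ B)) := by
  refine ⟨?_, ?_, ?_⟩
  · intro A B h
    funext r s
    apply psi_inj
    funext i j
    have := congrFun (congrFun h (finProdFinEquiv (r, i))) (finProdFinEquiv (s, j))
    simpa [Φ] using this
  · intro A B
    funext p q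
    simp only [Φ, matAddTT, matAdd]
    exact psi_vadd _ _ _ _
  · intro A B
    funext p q
    have hR : matMul (Φ A) (Φ B) p q
        = Finset.univ.sup fun st : Fin n × Fin 3 =>
            tmul (Φ A p (finProdFinEquiv st)) (Φ B (finProdFinEquiv st) q) :=
      sup_equiv finProdFinEquiv _
    rw [hR, ← Finset.univ_product_univ, Finset.sup_product_left]
    simp only [Φ, matMulTT]
    rw [psi_sup]
    refine Finset.sup_congr rfl fun s _ => ?_
    rw [psi_vmul]
    refine Finset.sup_congr rfl fun t _ => ?_
    simp [Φ, tmul]
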